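/- Let 𝒜 be a finite nonempty set, μ a translation invariant probability measure on 𝒜^(ℤ^d), (A, G) a tiling of ℤ^d with A partitioned into nonempty sets A_1, …, A_N, A_{<k} = ∪_{i<k} A_i, and G_n = {Σ g_i ê_i : |g_i| ≤ n}. Then for each k and all integers n > N' ≥ 1, S( A_k + G_n | A_{<k} + G_n ) ≤ (|G_n| − |G_{n−N'}|) · |A_k| · log|𝒜| + |G_{n−N'}| · S( A_k | (A_k + G_{N'}^−) ∪ (A_{<k} + G_{N'}) ), where G_{N'}^− = {g ∈ G_{N'} : g < 0} in the lexicographic order on G. -/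

import Mathlib

/-!
Tile the block `A_k + G_n` by the translates `A_k + g`, `g ∈ G_n`, and add them one at a time in
lexicographic order of `g`. By the chain rule the conditional entropy is the sum over `g` of
`S(A_k + g | (A_{<k} + G_n) ∪ ⋃_{g' < g} (A_k + g'))`. For `g ∈ G_{n-N'}` the conditioning set
contains `((A_k + G_{N'}^-) ∪ (A_{<k} + G_{N'})) + g`, so by monotonicity of conditional entropy
(strong subadditivity) and translation invariance the term is at most
`S(A_k | (A_k + G_{N'}^-) ∪ (A_{<k} + G_{N'}))`; each of the remaining
`|G_n| - |G_{n-N'}|` terms is at most `|A_k| log |𝒜|`. Both entropy inequalities are instances of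
Gibbs' inequality `∑ p log (q / p) ≤ ∑ q - ∑ p`.
-/

open MeasureTheory Real Filter Pointwise

/-- The lattice `ℤ^d`. -/
abbrev LatZ (d : ℕ) := Fin d → ℤ

/-- Probability of the cylinder set determined by the configuration `x` on the finite set `Λ`. -/
noncomputable def cylProb {d : ℕ} {𝒜 : Type*} [MeasurableSpace 𝒜]
    (μ : Measure (LatZ d → 𝒜)) (Λ : Finset (LatZ d)) (x : Λ → 𝒜) : ℝ :=
  (μ {ω | ∀ v : Λ, ω v.1 = x v}).toReal

/-- The entropy `S(Λ)` of a finite set of sites `Λ` with respect to `μ`. -/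
noncomputable def entS {d : ℕ} {𝒜 : Type*} [Fintype 𝒜] [MeasurableSpace 𝒜]
    (μ : Measure (LatZ d → 𝒜)) (Λ : Finset (LatZ d)) : ℝ :=
  -∑ x : (Λ → 𝒜), cylProb μ Λ x * Real.log (cylProb μ Λ x)

/-- The conditional entropy `S(Λ | Λ')` (terms with zero probability vanish since
`Real.log 0 = 0` and `0 * log 0 = 0`). -/
noncomputable def condEnt {d : ℕ} {𝒜 : Type*} [Fintype 𝒜] [MeasurableSpace 𝒜]
    (μ : Measure (LatZ d → 𝒜)) (Λ Λ' : Finset (LatZ d)) : ℝ :=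
  -∑ x : ((Λ ∪ Λ' : Finset (LatZ d)) → 𝒜),
      cylProb μ (Λ ∪ Λ') x *
        Real.log (cylProb μ (Λ ∪ Λ') x /
          cylProb μ Λ' (fun v => x ⟨v.1, Finset.mem_union_right Λ v.2⟩))

/-- The shift map `σ_v`, `(σ_v x)(u) = x(u + v)`. -/
def shiftMap {d : ℕ} {𝒜 : Type*} (v : LatZ d) (ω : LatZ d → 𝒜) : LatZ d → 𝒜 :=
  fun u => ω (u + v)

/-- `μ` is translation invariant if it is preserved by every shift `σ_v`. -/
def TransInv {d : ℕ} {𝒜 : Type*} [MeasurableSpace 𝒜] (μ : Measure (LatZ d → 𝒜)) : Prop :=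
  ∀ v : LatZ d, μ.map (shiftMap v) = μ

/-- The box `V_n = {v ∈ ℤ^d : |v_i| ≤ n ∀ i}` (also used as coordinate box `G_n`). -/
noncomputable def Vbox (d n : ℕ) : Finset (LatZ d) :=
  Fintype.piFinset fun _ => Finset.Icc (-(n : ℤ)) (n : ℤ)

open Classical in
/-- The finite set `Λ' ∩ V_n` for a (possibly infinite) `Λ' ⊆ ℤ^d`. -/
noncomputable def interBox (d : ℕ) (Λ' : Set (LatZ d)) (n : ℕ) : Finset (LatZ d) :=
  (Vbox d n).filter (· ∈ Λ')

/-- The lattice point `Σ_i c_i ê_i` with coordinates `c` in the basis `e`. -/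
def latt {d : ℕ} (e : Fin d → LatZ d) (c : Fin d → ℤ) : LatZ d :=
  ∑ i, c i • e i

/-- Lexicographic comparison of coordinate vectors. -/
def lexLt {d : ℕ} (c c' : Fin d → ℤ) : Prop :=
  ∃ i, c i < c' i ∧ ∀ j, j < i → c j = c' j

/-- The subgroup `G` generated by `e`, as a set. -/
def Gfull {d : ℕ} (e : Fin d → LatZ d) : Set (LatZ d) :=
  Set.range (latt e)

/-- `G^- = {g ∈ G : g < 0}` in the lexicographic order on `G`. -/
def Gneg {d : ℕ} (e : Fin d → LatZ d) : Set (LatZ d) :=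
  {g | ∃ c, lexLt c 0 ∧ g = latt e c}

/-- The finite subset `G_n = {Σ g_i ê_i : |g_i| ≤ n}` of `G`. -/
noncomputable def GboxF {d : ℕ} (e : Fin d → LatZ d) (n : ℕ) : Finset (LatZ d) :=
  (Vbox d n).image (latt e)

/-- A tiling `(A, G)` of `ℤ^d`, with `G` the subgroup generated by the
`ℤ`-linearly independent family `e`. -/
structure IsTiling {d : ℕ} (A : Finset (LatZ d)) (e : Fin d → LatZ d) : Prop where
  zero_mem : (0 : LatZ d) ∈ A
  indep : LinearIndependent ℤ e
  cover : ∀ v : LatZ d, ∃ a ∈ A, ∃ c : Fin d → ℤ, v = a + latt e c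
  disj : ∀ c c' : Fin d → ℤ, latt e c ≠ latt e c' →
    Disjoint (A.image (· + latt e c)) (A.image (· + latt e c'))

/-- The unit cube `U_d`. -/
noncomputable def Ud (d : ℕ) : Finset (LatZ d) :=
  Fintype.piFinset fun _ => Finset.Icc (-1 : ℤ) 1

open Classical in
/-- The boundary `∂Λ = Λ ∩ (U_d + Λ^C)`. -/
noncomputable def bdry {d : ℕ} (Λ : Finset (LatZ d)) : Finset (LatZ d) :=
  Λ.filter (fun v => v ∈ (↑(Ud d) : Set (LatZ d)) + (↑Λ : Set (LatZ d))ᶜ)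

open Finset Function

lemma sum_mul_log_div_le_sum_sub_sum {ι : Type*} [Fintype ι] {p q : ι → ℝ}
    (hp : ∀ i, 0 ≤ p i) (hq : ∀ i, 0 ≤ q i) (hpq : ∀ i, p i ≠ 0 → q i ≠ 0) :
    ∑ i, p i * log (q i / p i) ≤ ∑ i, q i - ∑ i, p i := by
  rw [← sum_sub_distrib]
  refine sum_le_sum fun i _ => ?_
  rcases (hp i).eq_or_lt with h | h
  · simp [← h, hq i]
  · have hq' : 0 < q i := (hq i).lt_of_ne (hpq i h.ne').symm
    calc p i * log (q i / p i) ≤ p i * (q i / p i - 1) :=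
          mul_le_mul_of_nonneg_left (log_le_sub_one_of_pos (div_pos hq' h)) h.le
      _ = q i - p i := by field_simp

lemma neg_sum_mul_log_le_log_card {ι : Type*} [Fintype ι] {p : ι → ℝ} (hp : ∀ i, 0 ≤ p i)
    (hsum : ∑ i, p i = 1) : -∑ i, p i * log (p i) ≤ log (Fintype.card ι) := by
  have : Nonempty ι := by
    by_contra h
    simp [not_nonempty_iff.1 h] at hsum
  have hK : (0 : ℝ) < Fintype.card ι := by exact_mod_cast Fintype.card_pos
  have hgibbs := sum_mul_log_div_le_sum_sub_sum hp (fun _ => (inv_pos.2 hK).le)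
    (fun _ _ => (inv_pos.2 hK).ne')
  have hterm : ∀ i, p i * log ((Fintype.card ι : ℝ)⁻¹ / p i) =
      -(p i * log (p i)) - p i * log (Fintype.card ι) := by
    intro i
    rcases eq_or_ne (p i) 0 with h | h
    · simp [h]
    · rw [log_div (inv_ne_zero hK.ne') h, log_inv]; ring
  simp only [hterm, sum_sub_distrib, sum_neg_distrib, ← sum_mul, hsum, sum_const, card_univ,
    nsmul_eq_mul] at hgibbs
  field_simp at hgibbs
  linarith

section Cylinders

variable {d : ℕ} {𝒜 : Type*}

abbrev restrictConf {Λ M : Finset (LatZ d)} (h : Λ ⊆ M) : (M → 𝒜) → Λ → 𝒜 :=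
  @restrict₂ _ (fun _ => 𝒜) Λ M h

def cylSet (Λ : Finset (LatZ d)) (x : Λ → 𝒜) : Set (LatZ d → 𝒜) :=
  {ω | ∀ v : Λ, ω v.1 = x v}

variable [MeasurableSpace 𝒜] (μ : Measure (LatZ d → 𝒜))

lemma measurableSet_cylSet [MeasurableSingletonClass 𝒜] (Λ : Finset (LatZ d)) (x : Λ → 𝒜) :
    MeasurableSet (cylSet Λ x) := by
  have : cylSet Λ x = ⋂ v : Λ, (fun ω : LatZ d → 𝒜 => ω v.1) ⁻¹' {x v} := by
    ext ω; simp [cylSet]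
  rw [this]
  exact .iInter fun v => measurable_pi_apply v.1 (measurableSet_singleton _)

lemma cylProb_nonneg (Λ : Finset (LatZ d)) (x : Λ → 𝒜) : 0 ≤ cylProb μ Λ x :=
  ENNReal.toReal_nonneg

lemma cylProb_le_restrictConf [IsFiniteMeasure μ] {Λ M : Finset (LatZ d)} (h : Λ ⊆ M)
    (z : M → 𝒜) :
    cylProb μ M z ≤ cylProb μ Λ (restrictConf h z) :=
  ENNReal.toReal_mono (measure_ne_top μ _) (measure_mono fun _ hω v => hω ⟨v.1, h v.2⟩)

lemma cylProb_restrictConf_ne_zero [IsFiniteMeasure μ] {Λ M : Finset (LatZ d)} (h : Λ ⊆ M)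
    {z : M → 𝒜} (hz : cylProb μ M z ≠ 0) : cylProb μ Λ (restrictConf h z) ≠ 0 :=
  fun h0 => hz (le_antisymm (h0 ▸ cylProb_le_restrictConf μ h z) (cylProb_nonneg μ M z))

variable [Fintype 𝒜] [MeasurableSingletonClass 𝒜]

lemma sum_cylProb_fiber [DecidableEq 𝒜] [IsFiniteMeasure μ] {Λ M : Finset (LatZ d)}
    (h : Λ ⊆ M) (y : Λ → 𝒜) :
    ∑ z with restrictConf h z = y, cylProb μ M z = cylProb μ Λ y := by
  have hunion :
      cylSet Λ y = ⋃ z ∈ ({z | restrictConf h z = y} : Finset (M → 𝒜)), cylSet M z := by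
    ext ω
    simp only [Set.mem_iUnion, mem_filter_univ, exists_prop]
    refine ⟨fun hω => ⟨fun v => ω v.1, funext hω, fun v => rfl⟩, ?_⟩
    rintro ⟨z, rfl, hωz⟩ v
    exact hωz ⟨v.1, h v.2⟩
  have hdisj : (({z | restrictConf h z = y} : Finset (M → 𝒜)) : Set (M → 𝒜)).PairwiseDisjoint
      (cylSet M) := fun a _ b _ hab =>
    Set.disjoint_left.2 fun ω hωa hωb => hab (funext fun v => (hωa v).symm.trans (hωb v))
  rw [cylProb, ← cylSet, hunion, measure_biUnion_finset hdisj fun z _ => measurableSet_cylSet M z,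
    ENNReal.toReal_sum fun z _ => measure_ne_top μ _]
  rfl

lemma sum_cylProb_mul_comp_restrictConf [IsFiniteMeasure μ]
    {Λ M : Finset (LatZ d)} (h : Λ ⊆ M) (f : (Λ → 𝒜) → ℝ) :
    ∑ z : M → 𝒜, cylProb μ M z * f (restrictConf h z) = ∑ y : Λ → 𝒜, cylProb μ Λ y * f y := by
  classical
  rw [← sum_fiberwise univ (restrictConf h)]
  refine sum_congr rfl fun y _ => ?_
  rw [← sum_cylProb_fiber μ h y, sum_mul]
  exact sum_congr rfl fun z hz => by rw [(mem_filter.1 hz).2]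

lemma sum_cylProb [IsProbabilityMeasure μ] (Λ : Finset (LatZ d)) :
    ∑ z : Λ → 𝒜, cylProb μ Λ z = 1 := by
  have := sum_cylProb_mul_comp_restrictConf μ (empty_subset Λ) fun _ => 1
  simp only [mul_one] at this
  rw [this, Fintype.sum_unique]
  simp [cylProb]

end Cylinders

section Entropy

variable {d : ℕ} {𝒜 : Type*} [Fintype 𝒜] [MeasurableSpace 𝒜] [MeasurableSingletonClass 𝒜]
  (μ : Measure (LatZ d → 𝒜))

lemma entS_eq_sum_restrictConf [IsFiniteMeasure μ] {Λ M : Finset (LatZ d)} (h : Λ ⊆ M) :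
    entS μ Λ = -∑ z : M → 𝒜, cylProb μ M z * log (cylProb μ Λ (restrictConf h z)) := by
  rw [entS, sum_cylProb_mul_comp_restrictConf μ h fun y => log (cylProb μ Λ y)]

lemma condEnt_eq_entS_sub [IsFiniteMeasure μ] (Λ Λ' : Finset (LatZ d)) :
    condEnt μ Λ Λ' = entS μ (Λ ∪ Λ') - entS μ Λ' := by
  have hterm : ∀ x : (Λ ∪ Λ' : Finset (LatZ d)) → 𝒜,
      cylProb μ _ x * log (cylProb μ _ x / cylProb μ Λ' (restrictConf subset_union_right x)) =
        cylProb μ _ x * log (cylProb μ _ x) -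
          cylProb μ _ x * log (cylProb μ Λ' (restrictConf subset_union_right x)) := by
    intro x
    rcases eq_or_ne (cylProb μ _ x) 0 with h | h
    · simp [h]
    · rw [log_div h (cylProb_restrictConf_ne_zero μ _ h), mul_sub]
  have hsum := sum_congr (s₁ := univ) rfl fun x _ => hterm x
  rw [sum_sub_distrib] at hsum
  calc condEnt μ Λ Λ' = -(∑ x, _ - ∑ x, _) := congrArg Neg.neg hsum
    _ = _ := by rw [entS, entS_eq_sum_restrictConf μ (subset_union_right (s₁ := Λ))]; ring

lemma condEnt_union [IsFiniteMeasure μ] (Λ₁ Λ₂ C : Finset (LatZ d)) :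
    condEnt μ (Λ₁ ∪ Λ₂) C = condEnt μ Λ₁ C + condEnt μ Λ₂ (C ∪ Λ₁) := by
  have h : Λ₂ ∪ (C ∪ Λ₁) = Λ₁ ∪ Λ₂ ∪ C := by ext; simp only [mem_union]; tauto
  rw [condEnt_eq_entS_sub, condEnt_eq_entS_sub, condEnt_eq_entS_sub, h, union_comm C Λ₁]
  ring

lemma condEnt_empty_left [IsFiniteMeasure μ] (C : Finset (LatZ d)) : condEnt μ ∅ C = 0 := by
  rw [condEnt_eq_entS_sub, empty_union, sub_self]

variable [IsProbabilityMeasure μ]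

lemma cylProb_le_one (Λ : Finset (LatZ d)) (x : Λ → 𝒜) : cylProb μ Λ x ≤ 1 :=
  (single_le_sum (fun y _ => cylProb_nonneg μ Λ y) (mem_univ x)).trans_eq (sum_cylProb μ Λ)

lemma entS_nonneg (Λ : Finset (LatZ d)) : 0 ≤ entS μ Λ := by
  rw [entS, ← sum_neg_distrib]
  exact sum_nonneg fun x _ =>
    by simpa [negMulLog] using negMulLog_nonneg (cylProb_nonneg μ Λ x) (cylProb_le_one μ Λ x)

lemma entS_le_card_mul_log (Λ : Finset (LatZ d)) :
    entS μ Λ ≤ Λ.card * log (Fintype.card 𝒜) := by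
  have := neg_sum_mul_log_le_log_card (cylProb_nonneg μ Λ) (sum_cylProb μ Λ)
  rwa [Fintype.card_fun, Fintype.card_coe, Nat.cast_pow, log_pow] at this

end Entropy

section StrongSubadditivity

variable {d : ℕ} {𝒜 : Type*} [Fintype 𝒜] [MeasurableSpace 𝒜] [MeasurableSingletonClass 𝒜]
  (μ : Measure (LatZ d → 𝒜))

-- A configuration on `P ∪ Q` with prescribed values `w` on `Q` is determined by its values on
-- `P`, which may be any extension of `w` restricted to `P ∩ Q`.
lemma sum_cylProb_restrictConf_fiber [DecidableEq 𝒜] [IsFiniteMeasure μ] (P Q : Finset (LatZ d))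
    (w : Q → 𝒜) :
    ∑ z with restrictConf subset_union_right z = w,
        cylProb μ P (restrictConf (subset_union_left (s₂ := Q)) z) =
      cylProb μ (P ∩ Q) (restrictConf inter_subset_right w) := by
  rw [← sum_cylProb_fiber μ inter_subset_left]
  refine sum_nbij' (restrictConf subset_union_left)
    (fun x v => if hv : v.1 ∈ P then x ⟨v, hv⟩ else w ⟨v, (mem_union.1 v.2).resolve_left hv⟩)
    ?_ ?_ ?_ ?_ fun _ _ => rfl
  · intro z hz
    rw [mem_filter_univ] at hz ⊢
    rw [← hz]; rfl
  · intro x hx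
    rw [mem_filter_univ] at hx ⊢
    funext v
    by_cases hv : v.1 ∈ P
    · simpa [hv] using congrFun hx ⟨v, mem_inter.2 ⟨hv, v.2⟩⟩
    · simp [hv]
  · intro z hz
    rw [mem_filter_univ] at hz
    funext v
    by_cases hv : v.1 ∈ P
    · simp [hv]
    · simpa [hv] using congrFun hz.symm ⟨v, (mem_union.1 v.2).resolve_left hv⟩
  · intro x _
    funext v
    simp [v.2]

lemma sum_cylProb_mul_cylProb_div_le_one [IsProbabilityMeasure μ] (P Q : Finset (LatZ d)) :
    ∑ z : (P ∪ Q : Finset (LatZ d)) → 𝒜,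
      cylProb μ P (restrictConf subset_union_left z) *
        cylProb μ Q (restrictConf subset_union_right z) /
          cylProb μ (P ∩ Q) (restrictConf (inter_subset_left.trans subset_union_left) z) ≤ 1 := by
  classical
  rw [← sum_fiberwise univ (restrictConf subset_union_right), ← sum_cylProb μ Q]
  refine sum_le_sum fun w _ => ?_
  set cw := cylProb μ (P ∩ Q) (restrictConf inter_subset_right w)
  have hconst : ∀ z ∈ ({z | restrictConf subset_union_right z = w} : Finset (_ → 𝒜)),
      cylProb μ P (restrictConf subset_union_left z) *
        cylProb μ Q (restrictConf subset_union_right z) /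
          cylProb μ (P ∩ Q) (restrictConf (inter_subset_left.trans subset_union_left) z) =
        cylProb μ P (restrictConf subset_union_left z) * (cylProb μ Q w / cw) := by
    intro z hz
    rw [mem_filter_univ] at hz
    subst hz
    exact mul_div_assoc _ _ _
  rw [sum_congr rfl hconst, ← sum_mul, sum_cylProb_restrictConf_fiber]
  rcases eq_or_ne cw 0 with h | h
  · rw [h, div_zero, mul_zero]; exact cylProb_nonneg μ Q w
  · rw [mul_div_cancel₀ _ h]

lemma entS_union_add_entS_inter_le [IsProbabilityMeasure μ] (P Q : Finset (LatZ d)) :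
    entS μ (P ∪ Q) + entS μ (P ∩ Q) ≤ entS μ P + entS μ Q := by
  have hP : P ⊆ P ∪ Q := subset_union_left
  have hQ : Q ⊆ P ∪ Q := subset_union_right
  have hPQ : P ∩ Q ⊆ P ∪ Q := inter_subset_left.trans hP
  set M := P ∪ Q
  set p : (M → 𝒜) → ℝ := cylProb μ M
  set a : (M → 𝒜) → ℝ := fun z => cylProb μ P (restrictConf hP z)
  set b : (M → 𝒜) → ℝ := fun z => cylProb μ Q (restrictConf hQ z)
  set c : (M → 𝒜) → ℝ := fun z => cylProb μ (P ∩ Q) (restrictConf hPQ z)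
  have hq : ∑ z, a z * b z / c z ≤ 1 := sum_cylProb_mul_cylProb_div_le_one μ P Q
  have hgibbs := sum_mul_log_div_le_sum_sub_sum (p := p) (q := fun z => a z * b z / c z)
    (cylProb_nonneg μ M)
    (fun z => div_nonneg (mul_nonneg (cylProb_nonneg μ _ _) (cylProb_nonneg μ _ _))
      (cylProb_nonneg μ _ _)) fun z hz =>
      div_ne_zero (mul_ne_zero (cylProb_restrictConf_ne_zero μ hP hz)
        (cylProb_restrictConf_ne_zero μ hQ hz)) (cylProb_restrictConf_ne_zero μ hPQ hz)
  rw [sum_cylProb] at hgibbs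
  have hterm : ∀ z, p z * log (a z * b z / c z / p z) =
      p z * log (a z) + p z * log (b z) - p z * log (c z) - p z * log (p z) := by
    intro z
    rcases eq_or_ne (p z) 0 with h | h
    · simp [h]
    · have ha := cylProb_restrictConf_ne_zero μ hP h
      have hb := cylProb_restrictConf_ne_zero μ hQ h
      have hc := cylProb_restrictConf_ne_zero μ hPQ h
      rw [log_div (div_ne_zero (mul_ne_zero ha hb) hc) h, log_div (mul_ne_zero ha hb) hc,
        log_mul ha hb]
      ring
  simp only [hterm, sum_sub_distrib, sum_add_distrib] at hgibbs
  rw [entS, entS_eq_sum_restrictConf μ hP, entS_eq_sum_restrictConf μ hQ,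
    entS_eq_sum_restrictConf μ hPQ]
  linarith

end StrongSubadditivity

section ConditionalEntropy

variable {d : ℕ} {𝒜 : Type*} [Fintype 𝒜] [MeasurableSpace 𝒜] [MeasurableSingletonClass 𝒜]
  (μ : Measure (LatZ d → 𝒜)) [IsProbabilityMeasure μ]

lemma condEnt_le_entS (Λ Λ' : Finset (LatZ d)) : condEnt μ Λ Λ' ≤ entS μ Λ := by
  rw [condEnt_eq_entS_sub]
  linarith [entS_union_add_entS_inter_le μ Λ Λ', entS_nonneg μ (Λ ∩ Λ')]

lemma condEnt_le_card_mul_log (Λ Λ' : Finset (LatZ d)) :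
    condEnt μ Λ Λ' ≤ Λ.card * log (Fintype.card 𝒜) :=
  (condEnt_le_entS μ Λ Λ').trans (entS_le_card_mul_log μ Λ)

lemma condEnt_le_of_subset {Λ Λ' Λ'' : Finset (LatZ d)} (h : Λ' ⊆ Λ'') (hd : Disjoint Λ Λ'') :
    condEnt μ Λ Λ'' ≤ condEnt μ Λ Λ' := by
  have hunion : Λ ∪ Λ' ∪ Λ'' = Λ ∪ Λ'' := by rw [union_assoc, union_eq_right.2 h]
  have hinter : (Λ ∪ Λ') ∩ Λ'' = Λ' := by
    rw [union_inter_distrib_right, disjoint_iff_inter_eq_empty.1 hd, empty_union,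
      inter_eq_left.2 h]
  have := entS_union_add_entS_inter_le μ (Λ ∪ Λ') Λ''
  rw [hunion, hinter] at this
  rw [condEnt_eq_entS_sub, condEnt_eq_entS_sub]
  linarith

lemma condEnt_biUnion {ι α : Type*} [DecidableEq ι] [LinearOrder α] {f : ι → α}
    (hf : Injective f) (F : ι → Finset (LatZ d)) (C : Finset (LatZ d)) (s : Finset ι) :
    condEnt μ (s.biUnion F) C =
      ∑ i ∈ s, condEnt μ (F i) (C ∪ {j ∈ s | f j < f i}.biUnion F) := by
  induction s using Finset.induction_on_max_value f with
  | empty => simp [condEnt_empty_left]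
  | insert a s ha hle ih =>
    have hlt : ∀ x ∈ s, f x < f a := fun x hx =>
      (hle x hx).lt_of_ne (hf.ne (ne_of_mem_of_not_mem hx ha))
    have hbefore_a : {j ∈ insert a s | f j < f a} = s := by
      rw [filter_insert, if_neg (lt_irrefl _), filter_true_of_mem hlt]
    have hbefore : ∀ x ∈ s, {j ∈ insert a s | f j < f x} = {j ∈ s | f j < f x} := fun x hx => by
      rw [filter_insert, if_neg (hlt x hx).asymm]
    rw [biUnion_insert, union_comm, condEnt_union, ih, sum_insert ha, hbefore_a, add_comm]
    congr 1
    exact sum_congr rfl fun x hx => by rw [hbefore x hx]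

end ConditionalEntropy

section TranslationInvariance

variable {d : ℕ} {𝒜 : Type*} [MeasurableSpace 𝒜] {μ : Measure (LatZ d → 𝒜)}

def translateEquiv (Λ : Finset (LatZ d)) (g : LatZ d) : Λ ≃ Λ.image (· + g) :=
  (Equiv.addRight g).subtypeEquiv fun a => by simp

lemma measurable_shiftMap (g : LatZ d) : Measurable (shiftMap g : (LatZ d → 𝒜) → _) :=
  measurable_pi_lambda _ fun u => measurable_pi_apply (u + g)

lemma cylProb_image_add [MeasurableSingletonClass 𝒜] (hinv : TransInv μ) (Λ : Finset (LatZ d))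
    (g : LatZ d) (y : Λ → 𝒜) :
    cylProb μ (Λ.image (· + g)) (y ∘ (translateEquiv Λ g).symm) = cylProb μ Λ y := by
  have hpre : cylSet (Λ.image (· + g)) (y ∘ (translateEquiv Λ g).symm) =
      shiftMap g ⁻¹' cylSet Λ y := by
    ext ω
    simp only [cylSet, Set.mem_ofPred_eq, Set.mem_preimage, shiftMap,
      ← (translateEquiv Λ g).forall_congr_right, comp_apply, Equiv.symm_apply_apply]
    rfl
  rw [cylProb, ← cylSet, hpre, ← Measure.map_apply (measurable_shiftMap g)
    (measurableSet_cylSet Λ y), hinv g]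
  rfl

lemma entS_image_add [Fintype 𝒜] [MeasurableSingletonClass 𝒜] (hinv : TransInv μ)
    (Λ : Finset (LatZ d)) (g : LatZ d) :
    entS μ (Λ.image (· + g)) = entS μ Λ := by
  rw [entS, entS, neg_inj]
  exact (Fintype.sum_equiv ((translateEquiv Λ g).arrowCongr (Equiv.refl 𝒜)) _ _
    fun y => by rw [← cylProb_image_add hinv Λ g y]; rfl).symm

lemma condEnt_image_add [Fintype 𝒜] [MeasurableSingletonClass 𝒜] [IsFiniteMeasure μ]
    (hinv : TransInv μ) (Λ Λ' : Finset (LatZ d)) (g : LatZ d) :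
    condEnt μ (Λ.image (· + g)) (Λ'.image (· + g)) = condEnt μ Λ Λ' := by
  rw [condEnt_eq_entS_sub, condEnt_eq_entS_sub, ← image_union, entS_image_add hinv,
    entS_image_add hinv]

lemma condEnt_image_add_le [Fintype 𝒜] [MeasurableSingletonClass 𝒜] [IsProbabilityMeasure μ]
    (hinv : TransInv μ) {Λ D Λ'' : Finset (LatZ d)} {g : LatZ d}
    (hD : D.image (· + g) ⊆ Λ'') (hd : Disjoint (Λ.image (· + g)) Λ'') :
    condEnt μ (Λ.image (· + g)) Λ'' ≤ condEnt μ Λ D :=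
  (condEnt_le_of_subset μ hD hd).trans_eq (condEnt_image_add hinv Λ D g)

end TranslationInvariance

section Lattice

variable {d : ℕ} {e : Fin d → LatZ d}

lemma latt_eq_linearCombination (e : Fin d → LatZ d) : latt e = Fintype.linearCombination ℤ e :=
  funext fun c => (Fintype.linearCombination_apply ℤ e c).symm

lemma latt_add (c c' : Fin d → ℤ) : latt e (c + c') = latt e c + latt e c' := by
  rw [latt_eq_linearCombination]
  exact map_add _ c c'

lemma latt_injective (he : LinearIndependent ℤ e) : Injective (latt e) := by
  rw [latt_eq_linearCombination]
  exact he.fintypeLinearCombination_injective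

lemma mem_Vbox {n : ℕ} {c : LatZ d} : c ∈ Vbox d n ↔ ∀ i, -(n : ℤ) ≤ c i ∧ c i ≤ n := by
  simp only [Vbox, Fintype.mem_piFinset, mem_Icc]

lemma Vbox_mono {m n : ℕ} (h : m ≤ n) : Vbox d m ⊆ Vbox d n := fun c hc => by
  rw [mem_Vbox] at hc ⊢
  exact fun i => ⟨by have := hc i; omega, by have := hc i; omega⟩

lemma add_mem_Vbox {m n : ℕ} (hmn : m ≤ n) {c h : LatZ d} (hc : c ∈ Vbox d (n - m))
    (hh : h ∈ Vbox d m) : c + h ∈ Vbox d n := by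
  rw [mem_Vbox] at hc hh ⊢
  intro i
  have := hc i
  have := hh i
  simp only [Pi.add_apply]
  omega

lemma card_GboxF (he : LinearIndependent ℤ e) (n : ℕ) : (GboxF e n).card = (Vbox d n).card :=
  card_image_of_injective _ (latt_injective he)

lemma add_GboxF (Λ : Finset (LatZ d)) (n : ℕ) :
    Λ + GboxF e n = (Vbox d n).biUnion fun c => Λ.image (· + latt e c) := by
  ext x
  simp only [GboxF, Finset.mem_add, mem_biUnion, mem_image, exists_exists_and_eq_and]
  constructor <;> rintro ⟨y, hy, c, hc, rfl⟩ <;> exact ⟨c, hc, y, hy, rfl⟩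

lemma lexLt_iff_toLex_lt {c c' : Fin d → ℤ} : lexLt c c' ↔ toLex c < toLex c' :=
  ⟨fun ⟨i, hlt, heq⟩ => ⟨i, heq, hlt⟩, fun ⟨i, heq, hlt⟩ => ⟨i, hlt, heq⟩⟩

lemma toLex_add_lt {c h : Fin d → ℤ} (hh : lexLt h 0) : toLex (c + h) < toLex c := by
  rw [lexLt_iff_toLex_lt] at hh
  simpa using add_lt_add_left hh (toLex c)

end Lattice

section Tiling

variable {d : ℕ} {A B B' A' : Finset (LatZ d)} {e : Fin d → LatZ d}

lemma IsTiling.disjoint_image_add_latt (htile : IsTiling A e) (hB : B ⊆ A) (hB' : B' ⊆ A)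
    {c c' : Fin d → ℤ} (h : c ≠ c' ∨ Disjoint B B') :
    Disjoint (B.image (· + latt e c)) (B'.image (· + latt e c')) := by
  by_cases hcc : latt e c = latt e c'
  · rw [hcc, disjoint_image (add_left_injective _)]
    exact h.resolve_left fun hne => hne (latt_injective htile.indep hcc)
  · exact (htile.disj c c' hcc).mono (image_subset_image hB) (image_subset_image hB')

lemma IsTiling.disjoint_image_add_latt_union (htile : IsTiling A e) (hB : B ⊆ A) (hA' : A' ⊆ A)
    (hBA' : Disjoint B A') (n : ℕ) {c : Fin d → ℤ} {S : Finset (Fin d → ℤ)} (hc : c ∉ S) :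
    Disjoint (B.image (· + latt e c))
      (A' + GboxF e n ∪ S.biUnion fun c' => B.image (· + latt e c')) := by
  rw [add_GboxF, disjoint_union_right, disjoint_biUnion_right, disjoint_biUnion_right]
  refine ⟨fun c' _ => htile.disjoint_image_add_latt hB hA' (.inr hBA'), fun c' hc' => ?_⟩
  exact htile.disjoint_image_add_latt hB hB (.inl fun h => hc (h ▸ hc'))

open Classical in
lemma image_add_latt_subset (he : LinearIndependent ℤ e) {m n : ℕ} (hmn : m ≤ n) {c : Fin d → ℤ}
    (hc : c ∈ Vbox d (n - m)) {S : Finset (Fin d → ℤ)}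
    (hS : ∀ c' ∈ Vbox d n, toLex c' < toLex c → c' ∈ S) :
    ((B + (GboxF e m).filter (fun h => h ∈ Gneg e)) ∪ (A' + GboxF e m)).image (· + latt e c) ⊆
      A' + GboxF e n ∪ S.biUnion fun c' => B.image (· + latt e c') := by
  rw [image_union, union_subset_iff]
  constructor
  · intro x hx
    obtain ⟨_, hu, rfl⟩ := mem_image.1 hx
    obtain ⟨b, hb, _, hh, rfl⟩ := Finset.mem_add.1 hu
    obtain ⟨hbox, cn, hneg, hcn⟩ := mem_filter.1 hh
    obtain ⟨ch, hch, rfl⟩ := mem_image.1 hbox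
    obtain rfl := latt_injective he hcn
    refine mem_union_right _ (mem_biUnion.2 ⟨c + ch,
      hS _ (add_mem_Vbox hmn hc hch) (toLex_add_lt hneg), mem_image.2 ⟨b, hb, ?_⟩⟩)
    rw [latt_add]; abel
  · intro x hx
    obtain ⟨_, hu, rfl⟩ := mem_image.1 hx
    obtain ⟨a, ha, _, hh, rfl⟩ := Finset.mem_add.1 hu
    obtain ⟨ch, hch, rfl⟩ := mem_image.1 hh
    refine mem_union_left _ (Finset.mem_add.2
      ⟨a, ha, latt e (c + ch), mem_image_of_mem _ (add_mem_Vbox hmn hc hch), ?_⟩)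
    rw [latt_add]; abel

end Tiling

open Classical in
theorem block_condEnt_upper_bound_general {d : ℕ} {𝒜 : Type*} [Fintype 𝒜]
    [MeasurableSpace 𝒜] [MeasurableSingletonClass 𝒜]
    (μ : Measure (LatZ d → 𝒜)) [IsProbabilityMeasure μ] (hinv : TransInv μ)
    (A : Finset (LatZ d)) (e : Fin d → LatZ d) (htile : IsTiling A e)
    (N : ℕ) (parts : Fin N → Finset (LatZ d))
    (hdisj : ∀ k l, k ≠ l → Disjoint (parts k) (parts l))
    (hunion : Finset.univ.biUnion parts = A)
    (k : Fin N) (n N' : ℕ) (hn : N' < n) :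
    condEnt μ (parts k + GboxF e n) ((Finset.Iio k).biUnion parts + GboxF e n) ≤
      (((GboxF e n).card : ℝ) - ((GboxF e (n - N')).card : ℝ)) * ((parts k).card : ℝ) *
          Real.log (Fintype.card 𝒜) +
        ((GboxF e (n - N')).card : ℝ) *
          condEnt μ (parts k)
            ((parts k + (GboxF e N').filter (fun h => h ∈ Gneg e)) ∪
              ((Finset.Iio k).biUnion parts + GboxF e N')) := by
  set B := parts k
  set A' := (Iio k).biUnion parts
  set D := (B + (GboxF e N').filter (fun h => h ∈ Gneg e)) ∪ (A' + GboxF e N')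
  have hB : B ⊆ A := hunion ▸ subset_biUnion_of_mem parts (mem_univ k)
  have hA' : A' ⊆ A := hunion ▸ biUnion_subset_biUnion_of_subset_left parts (subset_univ _)
  have hBA' : Disjoint B A' :=
    (disjoint_biUnion_right _ _ _).2 fun l hl => hdisj k l (mem_Iio.1 hl).ne'
  have hsub := Vbox_mono (d := d) (n.sub_le N')
  rw [add_GboxF, condEnt_biUnion μ toLex.injective, ← sum_sdiff hsub]
  calc _ ≤ ∑ _ ∈ Vbox d n \ Vbox d (n - N'), (B.card * log (Fintype.card 𝒜) : ℝ) +
        ∑ _ ∈ Vbox d (n - N'), condEnt μ B D :=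
        add_le_add (sum_le_sum fun c _ => ?boundary) (sum_le_sum fun c hc => ?interior)
    _ = _ := by
      rw [sum_const, sum_const, card_sdiff_of_subset hsub, card_GboxF htile.indep,
        card_GboxF htile.indep, nsmul_eq_mul, nsmul_eq_mul, Nat.cast_sub (card_le_card hsub)]
      ring
  case boundary =>
    rw [← card_image_of_injective B (add_left_injective (latt e c))]
    exact condEnt_le_card_mul_log μ _ _
  case interior =>
    refine condEnt_image_add_le hinv
      (image_add_latt_subset htile.indep hn.le hc fun c' hc' hlt => mem_filter.2 ⟨hc', hlt⟩)
      (htile.disjoint_image_add_latt_union hB hA' hBA' n ?_)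
    simp

open Classical in
/-- upper bound. For a translation invariant `μ`, a tiling `(A, G)`, a
partition of `A`, each `k`, and integers `n > N' ≥ 1`:
`S(A_k + G_n | A_{<k} + G_n) ≤ (|G_n| − |G_{n−N'}|)·|A_k|·log|𝒜|
  + |G_{n−N'}|·S(A_k | (A_k + G_{N'}^-) ∪ (A_{<k} + G_{N'}))`. -/
theorem block_condEnt_upper_bound {d : ℕ} {𝒜 : Type*} [Fintype 𝒜] [Nonempty 𝒜]
    [MeasurableSpace 𝒜] [MeasurableSingletonClass 𝒜]
    (μ : Measure (LatZ d → 𝒜)) [IsProbabilityMeasure μ] (hinv : TransInv μ)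
    (A : Finset (LatZ d)) (e : Fin d → LatZ d) (htile : IsTiling A e)
    (N : ℕ) (parts : Fin N → Finset (LatZ d))
    (hne : ∀ k, (parts k).Nonempty)
    (hdisj : ∀ k l, k ≠ l → Disjoint (parts k) (parts l))
    (hunion : Finset.univ.biUnion parts = A)
    (k : Fin N) (n N' : ℕ) (hN' : 1 ≤ N') (hn : N' < n) :
    condEnt μ (parts k + GboxF e n) ((Finset.Iio k).biUnion parts + GboxF e n) ≤
      (((GboxF e n).card : ℝ) - ((GboxF e (n - N')).card : ℝ)) * ((parts k).card : ℝ) *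
          Real.log (Fintype.card 𝒜) +
        ((GboxF e (n - N')).card : ℝ) *
          condEnt μ (parts k)
            ((parts k + (GboxF e N').filter (fun h => h ∈ Gneg e)) ∪
              ((Finset.Iio k).biUnion parts + GboxF e N')) :=
  block_condEnt_upper_bound_general μ hinv A e htile N parts hdisj hunion k n N' hn
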